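/- arXiv:1603.06416 — 6 statements merged into one kernel-verified Lean document; each statement's English description precedes it below -/
import Mathlib

section
/- Let a, b, c, m, ν, γ, r, δ, λ_h, λ_v be positive real numbers, let α ∈ (0,1], set A = ν^α + r^α + λ_h^α + δ^α and R_0 = √(a^{2α}·b·m·c/(λ_v^α·A)), and let J₀ be the 5×5 real matrix [[−λ_h^α, ν^α+δ^α, γ^α, 0, −a^α·b·m], [0, −A, 0, 0, a^α·b·m], [0, r^α, −(λ_h^α+γ^α), 0, 0], [0, −a^α·c, 0, −λ_v^α, 0], [0, a^α·c, 0, 0, −λ_v^α]]. If R_0 < 1, then every complex root z of the characteristic polynomial of J₀ satisfies Re(z) < 0, and consequently |arg(z)| > α·π/2. (Local asymptotic stability of the disease-free equilibrium when R_0 < 1.) -/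
open Polynomial

/-!
The Jacobian at the disease-free equilibrium is block triangular, so its characteristic
polynomial splits as `(X + λ_h^α) (X + λ_h^α + γ^α) (X + λ_v^α) q(X)` with
`q = (X + A) (X + λ_v^α) - a^{2α} b m c`. The linear factors have negative roots, and
`R₀ < 1` says precisely that the constant coefficient `A λ_v^α - a^{2α} b m c` of the monic
quadratic `q` is positive; its other coefficient `A + λ_v^α` is positive too, so by the
quadratic Routh–Hurwitz criterion both roots of `q` lie in the open left half-plane. Finally
`Re z < 0` means `|arg z| > π/2 ≥ απ/2`.
-/

theorem Matrix.charpoly_dfe_jacobian {R : Type*} [CommRing R] (L G V A p q r k c : R) :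
    (!![-L, p, q, 0, -k;
        0, -A, 0, 0, k;
        0, r, -(L + G), 0, 0;
        0, -c, 0, -V, 0;
        0, c, 0, 0, -V] : Matrix (Fin 5) (Fin 5) R).charpoly
      = (X + C L) * (X + C (L + G)) * (X + C V) * ((X + C A) * (X + C V) - C (k * c)) := by
  rw [Matrix.charpoly, Matrix.det_succ_column_zero]
  simp [Fin.sum_univ_succ, Matrix.det_succ_column_zero, Matrix.charmatrix_apply,
    Matrix.submatrix, Fin.succAbove]
  ring

namespace Complex

theorem re_neg_of_add_ofReal_eq_zero {p : ℝ} (hp : 0 < p) {z : ℂ} (h : z + p = 0) :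
    z.re < 0 := by
  have hre := congrArg re h
  rw [add_re, ofReal_re, zero_re] at hre
  linarith

theorem re_neg_of_sq_add_mul_add_eq_zero {s t : ℝ} (hs : 0 < s) (ht : 0 < t) {z : ℂ}
    (h : z ^ 2 + s * z + t = 0) : z.re < 0 := by
  have hre := congrArg re h
  have him := congrArg im h
  simp only [pow_two, add_re, mul_re, ofReal_re, ofReal_im, add_im, mul_im, zero_re,
    zero_im] at hre him
  have him' : z.im * (2 * z.re + s) = 0 := by linarith
  rcases mul_eq_zero.mp him' with hreal | hmid
  · rw [hreal] at hre
    nlinarith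
  · linarith

end Complex

theorem Real.lt_of_sqrt_div_lt_one {x y : ℝ} (hy : 0 < y) (h : √(x / y) < 1) : x < y := by
  rwa [Real.sqrt_lt' one_pos, one_pow, div_lt_one hy] at h

theorem dfe_locally_asymptotically_stable_general
    (a b c m ν γ r δ lh lv α : ℝ)
    (ha : 0 < a) (hν : 0 < ν)
    (hγ : 0 < γ) (hr : 0 < r) (hδ : 0 < δ) (hlh : 0 < lh) (hlv : 0 < lv)
    (hα : α ∈ Set.Ioc (0 : ℝ) 1)
    (A : ℝ) (hA : A = ν ^ α + r ^ α + lh ^ α + δ ^ α)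
    (R₀ : ℝ) (hR₀ : R₀ = Real.sqrt (a ^ (2 * α) * b * m * c / (lv ^ α * A)))
    (J₀ : Matrix (Fin 5) (Fin 5) ℝ)
    (hJ₀ : J₀ = !![-lh ^ α, ν ^ α + δ ^ α, γ ^ α, 0, -(a ^ α * b * m);
                   0, -A, 0, 0, a ^ α * b * m;
                   0, r ^ α, -(lh ^ α + γ ^ α), 0, 0;
                   0, -(a ^ α * c), 0, -lv ^ α, 0;
                   0, a ^ α * c, 0, 0, -lv ^ α])
    (hR : R₀ < 1) :
    ∀ z : ℂ, (J₀.charpoly.map (algebraMap ℝ ℂ)).IsRoot z →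
      z.re < 0 ∧ α * Real.pi / 2 < |z.arg| := by
  intro z hz
  have hL : 0 < lh ^ α := Real.rpow_pos_of_pos hlh α
  have hLG : 0 < lh ^ α + γ ^ α := by positivity
  have hV : 0 < lv ^ α := Real.rpow_pos_of_pos hlv α
  have hApos : 0 < A := by rw [hA]; positivity
  have hK : a ^ α * b * m * (a ^ α * c) < lv ^ α * A := by
    have hK' : a ^ α * b * m * (a ^ α * c) = a ^ (2 * α) * b * m * c := by
      rw [two_mul, Real.rpow_add ha]; ring
    exact hK' ▸ Real.lt_of_sqrt_div_lt_one (by positivity) (hR₀ ▸ hR)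
  rw [hJ₀, Matrix.charpoly_dfe_jacobian] at hz
  simp only [Polynomial.map_mul, Polynomial.map_sub, Polynomial.map_add, map_X, map_C,
    IsRoot.def, eval_mul, eval_sub, eval_add, eval_X, eval_C, Complex.coe_algebraMap,
    mul_eq_zero] at hz
  have hre : z.re < 0 := by
    rcases hz with ((hlin | hlin) | hlin) | hquad
    · exact Complex.re_neg_of_add_ofReal_eq_zero hL hlin
    · exact Complex.re_neg_of_add_ofReal_eq_zero hLG hlin
    · exact Complex.re_neg_of_add_ofReal_eq_zero hV hlin
    · refine Complex.re_neg_of_sq_add_mul_add_eq_zero (add_pos hApos hV)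
        (sub_pos.mpr (mul_comm A _ ▸ hK)) ?_
      push_cast at hquad ⊢
      linear_combination hquad
  have hαπ : α * Real.pi / 2 ≤ Real.pi / 2 := by nlinarith [hα.2, Real.pi_pos]
  exact ⟨hre, hαπ.trans_lt (not_le.mp (Complex.abs_arg_le_pi_div_two_iff.not.mpr hre.not_ge))⟩

/-- Local asymptotic stability of the disease-free equilibrium when `R₀ < 1`:
every complex eigenvalue `z` of the Jacobian `J₀` satisfies `Re z < 0`, and
consequently `|arg z| > α·π/2`. -/
theorem dfe_locally_asymptotically_stable
    (a b c m ν γ r δ lh lv α : ℝ)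
    (ha : 0 < a) (hb : 0 < b) (hc : 0 < c) (hm : 0 < m) (hν : 0 < ν)
    (hγ : 0 < γ) (hr : 0 < r) (hδ : 0 < δ) (hlh : 0 < lh) (hlv : 0 < lv)
    (hα : α ∈ Set.Ioc (0 : ℝ) 1)
    (A : ℝ) (hA : A = ν ^ α + r ^ α + lh ^ α + δ ^ α)
    (R₀ : ℝ) (hR₀ : R₀ = Real.sqrt (a ^ (2 * α) * b * m * c / (lv ^ α * A)))
    (J₀ : Matrix (Fin 5) (Fin 5) ℝ)
    (hJ₀ : J₀ = !![-lh ^ α, ν ^ α + δ ^ α, γ ^ α, 0, -(a ^ α * b * m);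
                   0, -A, 0, 0, a ^ α * b * m;
                   0, r ^ α, -(lh ^ α + γ ^ α), 0, 0;
                   0, -(a ^ α * c), 0, -lv ^ α, 0;
                   0, a ^ α * c, 0, 0, -lv ^ α])
    (hR : R₀ < 1) :
    ∀ z : ℂ, (J₀.charpoly.map (algebraMap ℝ ℂ)).IsRoot z →
      z.re < 0 ∧ α * Real.pi / 2 < |z.arg| :=
  dfe_locally_asymptotically_stable_general a b c m ν γ r δ lh lv α ha hν hγ hr hδ hlh hlv hα A hA
    R₀ hR₀ J₀ hJ₀ hR
end

section
/- Let a, b, c, m, ν, γ, r, δ, λ_h, λ_v be positive real numbers, let α ∈ (0,1], set A = ν^α + r^α + λ_h^α + δ^α and R_0 = √(a^{2α}·b·m·c/(λ_v^α·A)), and let J₀ be the 5×5 real matrix [[−λ_h^α, ν^α+δ^α, γ^α, 0, −a^α·b·m], [0, −A, 0, 0, a^α·b·m], [0, r^α, −(λ_h^α+γ^α), 0, 0], [0, −a^α·c, 0, −λ_v^α, 0], [0, a^α·c, 0, 0, −λ_v^α]]. If R_0 > 1, then the characteristic polynomial of J₀ has a real root z > 0; in particular this eigenvalue satisfies |arg(z)|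 = 0 < α·π/2, so the disease-free equilibrium is unstable. -/
/-!
Expanding along the columns with a single nonzero entry splits off the eigenvalues `-λ_h^α`,
`-λ_v^α` and `-(λ_h^α + γ^α)`; what remains is the infected block
`[[-A, a^α b m], [a^α c, -λ_v^α]]`, whose characteristic polynomial
`z² + (A + λ_v^α) z + (A λ_v^α - a^{2α} b m c)` has a negative constant term exactly when
`R₀ > 1`. A monic quadratic with negative constant term has a positive root.
-/

open Polynomial

theorem charpoly_dfe_jacobian (u v w x y A K P Q : ℝ) :
    (!![-u, v, w, 0, -P; 0, -A, 0, 0, P; 0, x, -y, 0, 0; 0, -Q, 0, -K, 0; 0, Q, 0, 0, -K] :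
        Matrix (Fin 5) (Fin 5) ℝ).charpoly =
      (X + C u) * (X + C y) * (X + C K) * (X ^ 2 + C (A + K) * X + C (A * K - P * Q)) := by
  rw [Matrix.charpoly, Matrix.det_succ_row_zero]
  simp [Fin.sum_univ_succ, Matrix.det_succ_row_zero, Matrix.charmatrix_apply, Fin.succAbove]
  ring

theorem exists_pos_root_of_const_neg {B c : ℝ} (hc : c < 0) :
    ∃ z : ℝ, 0 < z ∧ z ^ 2 + B * z + c = 0 := by
  have hs := Real.sq_sqrt (by nlinarith : 0 ≤ B ^ 2 - 4 * c)
  have hB : B < √(B ^ 2 - 4 * c) := Real.lt_sqrt_of_sq_lt (by linarith)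
  exact ⟨(-B + √(B ^ 2 - 4 * c)) / 2, by linarith, by linear_combination hs / 4⟩

theorem lt_of_one_lt_sqrt_div {N D : ℝ} (hD : 0 < D) (h : 1 < √(N / D)) : D < N := by
  rwa [Real.lt_sqrt zero_le_one, one_pow, one_lt_div hD] at h

theorem dfe_unstable_of_R0_gt_one_general
    (a b c m ν γ r δ lh lv α : ℝ)
    (ha : 0 < a) (hν : 0 < ν)
    (hr : 0 < r) (hδ : 0 < δ) (hlh : 0 < lh) (hlv : 0 < lv)
    (hα : α ∈ Set.Ioc (0 : ℝ) 1)
    (A : ℝ) (hA : A = ν ^ α + r ^ α + lh ^ α + δ ^ α)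
    (R₀ : ℝ) (hR₀ : R₀ = Real.sqrt (a ^ (2 * α) * b * m * c / (lv ^ α * A)))
    (J₀ : Matrix (Fin 5) (Fin 5) ℝ)
    (hJ₀ : J₀ = !![-lh ^ α, ν ^ α + δ ^ α, γ ^ α, 0, -(a ^ α * b * m);
                   0, -A, 0, 0, a ^ α * b * m;
                   0, r ^ α, -(lh ^ α + γ ^ α), 0, 0;
                   0, -(a ^ α * c), 0, -lv ^ α, 0;
                   0, a ^ α * c, 0, 0, -lv ^ α])
    (hR : 1 < R₀) :
    ∃ z : ℝ, 0 < z ∧ J₀.charpoly.IsRoot z ∧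
      |Complex.arg (z : ℂ)| = 0 ∧ 0 < α * Real.pi / 2 := by
  have hA_pos : 0 < A := by rw [hA]; positivity
  have h_threshold : lv ^ α * A < a ^ α * b * m * (a ^ α * c) := by
    have hsq : a ^ (2 * α) = a ^ α * a ^ α := by rw [two_mul, Real.rpow_add ha]
    have hlt := lt_of_one_lt_sqrt_div (by positivity) (hR₀ ▸ hR)
    rw [hsq] at hlt
    linarith
  obtain ⟨z, hz, hroot⟩ := exists_pos_root_of_const_neg (B := A + lv ^ α)
    (by linarith : A * lv ^ α - a ^ α * b * m * (a ^ α * c) < 0)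
  refine ⟨z, hz, ?_, by simp [Complex.arg_ofReal_of_nonneg hz.le], ?_⟩
  · rw [hJ₀, IsRoot, charpoly_dfe_jacobian]
    simp [hroot]
  · have hα_pos := hα.1
    positivity

/-- Instability of the disease-free equilibrium when `R₀ > 1`: the
characteristic polynomial of the Jacobian `J₀` has a positive real root `z`,
and this eigenvalue satisfies `|arg z| = 0 < α·π/2`. -/
theorem dfe_unstable_of_R0_gt_one
    (a b c m ν γ r δ lh lv α : ℝ)
    (ha : 0 < a) (hb : 0 < b) (hc : 0 < c) (hm : 0 < m) (hν : 0 < ν)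
    (hγ : 0 < γ) (hr : 0 < r) (hδ : 0 < δ) (hlh : 0 < lh) (hlv : 0 < lv)
    (hα : α ∈ Set.Ioc (0 : ℝ) 1)
    (A : ℝ) (hA : A = ν ^ α + r ^ α + lh ^ α + δ ^ α)
    (R₀ : ℝ) (hR₀ : R₀ = Real.sqrt (a ^ (2 * α) * b * m * c / (lv ^ α * A)))
    (J₀ : Matrix (Fin 5) (Fin 5) ℝ)
    (hJ₀ : J₀ = !![-lh ^ α, ν ^ α + δ ^ α, γ ^ α, 0, -(a ^ α * b * m);
                   0, -A, 0, 0, a ^ α * b * m;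
                   0, r ^ α, -(lh ^ α + γ ^ α), 0, 0;
                   0, -(a ^ α * c), 0, -lv ^ α, 0;
                   0, a ^ α * c, 0, 0, -lv ^ α])
    (hR : 1 < R₀) :
    ∃ z : ℝ, 0 < z ∧ J₀.charpoly.IsRoot z ∧
      |Complex.arg (z : ℂ)| = 0 ∧ 0 < α * Real.pi / 2 :=
  dfe_unstable_of_R0_gt_one_general a b c m ν γ r δ lh lv α ha hν hr hδ hlh hlv hα A hA R₀ hR₀ J₀
    hJ₀ hR
end

section
/- Let a, b, c, m, ν, γ, r, δ, λ_h, λ_v be positive real numbers, let α ∈ (0,1], and set A = ν^α + r^α + λ_h^α + δ^α. Suppose real numbers s, i, r_h, S, I with i > 0 satisfy the equilibrium equations of the fractional malaria model: λ_h^α(1−s) − a^α·b·m·s·I + ν^α·i + γ^α·r_h + δ^α·s·i = 0; a^α·b·m·s·I − A·i + δ^α·i² = 0; r^α·i − (γ^α+λ_h^α)·r_h + δ^α·i·r_h = 0; λ_v^α(1−S) − a^α·c·i·S = 0; a^α·c·S·i − λ_v^α·I = 0. If moreover λ_h^α + γ^α − δ^α·i ≠ 0 and (λ_h^α + γ^α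 − δ^α·i)·[(λ_h^α − δ^α·i)(λ_v^α + a^α·c·i) + a^{2α}·b·m·c·i] ≠ 0, then: r_h = r^α·i/(λ_h^α + γ^α − δ^α·i); S = λ_v^α/(λ_v^α + a^α·c·i); I = a^α·c·i/(λ_v^α + a^α·c·i); and s = (λ_v^α + a^α·c·i)·[(λ_h^α + γ^α − δ^α·i)(λ_h^α + ν^α·i) + γ^α·r^α·i] / { (λ_h^α + γ^α − δ^α·i)·[(λ_h^α − δ^α·i)(λ_v^α + a^α·c·i) + a^{2α}·b·m·c·i] }. -/
/-- At an endemic equilibrium (`i > 0`) of the fractional malaria model, the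
components `r_h`, `S`, `I`, `s` are expressed in terms of `i` as stated. -/
theorem endemic_equilibrium_components
    (a b c m ν γ rr δ lh lv α : ℝ)
    (ha : 0 < a) (hb : 0 < b) (hc : 0 < c) (hm : 0 < m) (hν : 0 < ν)
    (hγ : 0 < γ) (hrr : 0 < rr) (hδ : 0 < δ) (hlh : 0 < lh) (hlv : 0 < lv)
    (hα : α ∈ Set.Ioc (0 : ℝ) 1)
    (A : ℝ) (hA : A = ν ^ α + rr ^ α + lh ^ α + δ ^ α)
    (s i rh S I : ℝ) (hi : 0 < i)
    (heq1 : lh ^ α * (1 - s) - a ^ α * b * m * s * I + ν ^ α * i + γ ^ α * rh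
              + δ ^ α * s * i = 0)
    (heq2 : a ^ α * b * m * s * I - A * i + δ ^ α * i ^ 2 = 0)
    (heq3 : rr ^ α * i - (γ ^ α + lh ^ α) * rh + δ ^ α * i * rh = 0)
    (heq4 : lv ^ α * (1 - S) - a ^ α * c * i * S = 0)
    (heq5 : a ^ α * c * S * i - lv ^ α * I = 0)
    (hne1 : lh ^ α + γ ^ α - δ ^ α * i ≠ 0)
    (hne2 : (lh ^ α + γ ^ α - δ ^ α * i) *
              ((lh ^ α - δ ^ α * i) * (lv ^ α + a ^ α * c * i)
                + a ^ (2 * α) * b * m * c * i) ≠ 0) :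
    rh = rr ^ α * i / (lh ^ α + γ ^ α - δ ^ α * i) ∧
    S = lv ^ α / (lv ^ α + a ^ α * c * i) ∧
    I = a ^ α * c * i / (lv ^ α + a ^ α * c * i) ∧
    s = (lv ^ α + a ^ α * c * i) *
          ((lh ^ α + γ ^ α - δ ^ α * i) * (lh ^ α + ν ^ α * i) + γ ^ α * rr ^ α * i) /
        ((lh ^ α + γ ^ α - δ ^ α * i) *
          ((lh ^ α - δ ^ α * i) * (lv ^ α + a ^ α * c * i)
            + a ^ (2 * α) * b * m * c * i)) := by
  have hD : lv ^ α + a ^ α * c * i ≠ 0 := by positivity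
  have hB := hne1
  have hrh' : rh * (lh ^ α + γ ^ α - δ ^ α * i) = rr ^ α * i := by
    linear_combination -heq3
  have hS' : S * (lv ^ α + a ^ α * c * i) = lv ^ α := by
    linear_combination -heq4
  have hI' : I * (lv ^ α + a ^ α * c * i) = a ^ α * c * i := by
    have hlv' : (lv : ℝ) ^ α ≠ 0 := by positivity
    apply mul_left_cancel₀ hlv'
    linear_combination (-(lv ^ α + a ^ α * c * i)) * heq5 + a ^ α * c * i * hS'
  refine ⟨?_, ?_, ?_, ?_⟩
  · rw [eq_div_iff hB]; exact hrh'
  · rw [eq_div_iff hD]; exact hS'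
  · rw [eq_div_iff hD]; exact hI'
  · rw [two_mul, Real.rpow_add ha]
    have hne2' : (lh ^ α + γ ^ α - δ ^ α * i) *
        ((lh ^ α - δ ^ α * i) * (lv ^ α + a ^ α * c * i)
          + a ^ α * a ^ α * b * m * c * i) ≠ 0 := by
      rw [two_mul, Real.rpow_add ha] at hne2; exact hne2
    rw [eq_div_iff hne2']
    linear_combination (-((lh ^ α + γ ^ α - δ ^ α * i) * (lv ^ α + a ^ α * c * i))) * heq1
      + γ ^ α * (lv ^ α + a ^ α * c * i) * hrh'
      - (lh ^ α + γ ^ α - δ ^ α * i) * a ^ α * b * m * s * hI'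
end

section
/- Let b₁, b₂, b₃ be real numbers, let g(x) = x³ + b₁x² + b₂x + b₃, and let D(g) = 18·b₁·b₂·b₃ + b₁²·b₂² − 4·b₁³·b₃ − 4·b₂³ − 27·b₃². If D(g) < 0, b₁ ≥ 0, b₂ ≥ 0, b₃ > 0, and 0 < α < 2/3, then every complex root z of g satisfies |arg(z)| > α·π/2. -/
/-!
A real root of `g` is negative, since `g > 0` on `[0, ∞)`. For a non-real root `z = x + iy`,
dividing the imaginary part of `g(z) = 0` by `y` gives `y² = 3x² + 2b₁x + b₂`, hence `y² ≥ 3x²`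
whenever `x > 0`. Either way `z` lies outside the open sector `|arg z| < π/3`, and
`α·π/2 < π/3` for `α < 2/3`.
-/

open Real

theorem Complex.two_mul_re_le_norm_of_three_mul_re_sq_le_im_sq {z : ℂ}
    (h : 0 < z.re → 3 * z.re ^ 2 ≤ z.im ^ 2) :
    2 * z.re ≤ ‖z‖ := by
  rcases le_or_gt z.re 0 with hre | hre
  · linarith [norm_nonneg z]
  · have hnorm : ‖z‖ ^ 2 = z.re ^ 2 + z.im ^ 2 := by
      rw [Complex.sq_norm, Complex.normSq_apply]; ring
    nlinarith [norm_nonneg z, h hre]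

theorem Complex.pi_div_three_le_abs_arg {z : ℂ} (hz : z ≠ 0) (h : 2 * z.re ≤ ‖z‖) :
    π / 3 ≤ |z.arg| := by
  have hcos : Real.cos |z.arg| ≤ Real.cos (π / 3) := by
    rw [cos_abs, Complex.cos_arg hz, cos_pi_div_three, div_le_iff₀ (norm_pos_iff.mpr hz)]
    linarith
  exact (strictAntiOn_cos.le_iff_ge ⟨abs_nonneg _, Complex.abs_arg_le_pi z⟩
    ⟨by positivity, by linarith [pi_pos]⟩).mp hcos

section Cubic

variable {b₁ b₂ b₃ : ℝ} {z : ℂ}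

theorem cubic_root_re_eq
    (hz : z ^ 3 + (b₁ : ℂ) * z ^ 2 + (b₂ : ℂ) * z + (b₃ : ℂ) = 0) :
    z.re ^ 3 - 3 * z.re * z.im ^ 2 + b₁ * (z.re ^ 2 - z.im ^ 2) + b₂ * z.re + b₃ = 0 := by
  have h := congrArg Complex.re hz
  simp only [pow_succ, pow_zero, one_mul, Complex.add_re, Complex.mul_re, Complex.mul_im,
    Complex.ofReal_re, Complex.ofReal_im, Complex.zero_re] at h
  linear_combination h

theorem cubic_root_im_eq
    (hz : z ^ 3 + (b₁ : ℂ) * z ^ 2 + (b₂ : ℂ) * z + (b₃ : ℂ) = 0) :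
    z.im * (3 * z.re ^ 2 - z.im ^ 2 + 2 * b₁ * z.re + b₂) = 0 := by
  have h := congrArg Complex.im hz
  simp only [pow_succ, pow_zero, one_mul, Complex.add_im, Complex.mul_re, Complex.mul_im,
    Complex.ofReal_re, Complex.ofReal_im, Complex.zero_im] at h
  linear_combination h

theorem three_mul_re_sq_le_im_sq_of_cubic_root (hb₁ : 0 ≤ b₁) (hb₂ : 0 ≤ b₂) (hb₃ : 0 < b₃)
    (hz : z ^ 3 + (b₁ : ℂ) * z ^ 2 + (b₂ : ℂ) * z + (b₃ : ℂ) = 0) (hre : 0 < z.re) :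
    3 * z.re ^ 2 ≤ z.im ^ 2 := by
  rcases mul_eq_zero.mp (cubic_root_im_eq hz) with him | him
  · have hreal := cubic_root_re_eq hz
    rw [him] at hreal
    nlinarith [pow_pos hre 3, mul_nonneg hb₁ (sq_nonneg z.re), mul_nonneg hb₂ hre.le]
  · nlinarith [mul_nonneg hb₁ hre.le]

theorem pi_div_three_le_abs_arg_of_cubic_root (hb₁ : 0 ≤ b₁) (hb₂ : 0 ≤ b₂) (hb₃ : 0 < b₃)
    (hz : z ^ 3 + (b₁ : ℂ) * z ^ 2 + (b₂ : ℂ) * z + (b₃ : ℂ) = 0) :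
    π / 3 ≤ |z.arg| := by
  have hz0 : z ≠ 0 := by
    rintro rfl
    norm_num at hz
    exact hb₃.ne' hz
  exact Complex.pi_div_three_le_abs_arg hz0 <|
    Complex.two_mul_re_le_norm_of_three_mul_re_sq_le_im_sq <|
    three_mul_re_sq_le_im_sq_of_cubic_root hb₁ hb₂ hb₃ hz

end Cubic

theorem cubic_stable_case_ii_general (b₁ b₂ b₃ α : ℝ)
    (hb₁ : 0 ≤ b₁) (hb₂ : 0 ≤ b₂) (hb₃ : 0 < b₃)
    (hα : α < 2 / 3) :
    ∀ z : ℂ, z ^ 3 + (b₁ : ℂ) * z ^ 2 + (b₂ : ℂ) * z + (b₃ : ℂ) = 0 →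
      α * Real.pi / 2 < |z.arg| := by
  intro z hz
  calc α * π / 2 < π / 3 := by nlinarith [pi_pos]
    _ ≤ |z.arg| := pi_div_three_le_abs_arg_of_cubic_root hb₁ hb₂ hb₃ hz

/-- Fractional Routh–Hurwitz case (ii) for the cubic `g(x) = x³ + b₁x² + b₂x + b₃`:
if `D(g) < 0`, `b₁ ≥ 0`, `b₂ ≥ 0`, `b₃ > 0`, and `0 < α < 2/3`, then every
complex root `z` of `g` satisfies `|arg z| > α·π/2`. -/
theorem cubic_stable_case_ii (b₁ b₂ b₃ α : ℝ)
    (hD : 18 * b₁ * b₂ * b₃ + b₁ ^ 2 * b₂ ^ 2 - 4 * b₁ ^ 3 * b₃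
            - 4 * b₂ ^ 3 - 27 * b₃ ^ 2 < 0)
    (hb₁ : 0 ≤ b₁) (hb₂ : 0 ≤ b₂) (hb₃ : 0 < b₃)
    (hα₀ : 0 < α) (hα : α < 2 / 3) :
    ∀ z : ℂ, z ^ 3 + (b₁ : ℂ) * z ^ 2 + (b₂ : ℂ) * z + (b₃ : ℂ) = 0 →
      α * Real.pi / 2 < |z.arg| :=
  cubic_stable_case_ii_general b₁ b₂ b₃ α hb₁ hb₂ hb₃ hα
end

section
/- Let b₁, b₂, b₃ be real numbers, let g(x) = x³ + b₁x² + b₂x + b₃, and let D(g) = 18·b₁·b₂·b₃ + b₁²·b₂² − 4·b₁³·b₃ − 4·b₂³ − 27·b₃². If D(g) < 0, b₁ > 0, b₂ > 0, b₁·b₂ = b₃, and α ∈ (0,1), then every complex root z of g satisfies |arg(z)| > α·π/2. -/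
/-- Fractional Routh–Hurwitz case (iii) for the cubic `g(x) = x³ + b₁x² + b₂x + b₃`:
if `D(g) < 0`, `b₁ > 0`, `b₂ > 0`, `b₁·b₂ = b₃`, and `α ∈ (0,1)`, then every
complex root `z` of `g` satisfies `|arg z| > α·π/2`. -/
theorem cubic_stable_case_iii (b₁ b₂ b₃ α : ℝ)
    (hD : 18 * b₁ * b₂ * b₃ + b₁ ^ 2 * b₂ ^ 2 - 4 * b₁ ^ 3 * b₃
            - 4 * b₂ ^ 3 - 27 * b₃ ^ 2 < 0)
    (hb₁ : 0 < b₁) (hb₂ : 0 < b₂) (hb₃ : b₁ * b₂ = b₃)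
    (hα : α ∈ Set.Ioo (0 : ℝ) 1) :
    ∀ z : ℂ, z ^ 3 + (b₁ : ℂ) * z ^ 2 + (b₂ : ℂ) * z + (b₃ : ℂ) = 0 →
      α * Real.pi / 2 < |z.arg| := by
  obtain ⟨hα0, hα1⟩ := hα
  have hπ : (0:ℝ) < Real.pi := Real.pi_pos
  have hkey : α * Real.pi / 2 < Real.pi / 2 := by nlinarith
  intro z hz
  have hfac : (z + (b₁:ℂ)) * (z ^ 2 + (b₂:ℂ)) = 0 := by
    rw [← hz, ← hb₃]; push_cast; ring
  rcases mul_eq_zero.mp hfac with h | h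
  · have hzv : z = ((-b₁ : ℝ) : ℂ) := by push_cast; linear_combination h
    rw [hzv, Complex.arg_ofReal_of_neg (by linarith)]
    rw [abs_of_pos hπ]; linarith
  · -- z² = -b₂, so z is purely imaginary nonzero
    have hsq : z ^ 2 = ((-b₂ : ℝ) : ℂ) := by push_cast; linear_combination h
    have hre2 : z.re ^ 2 - z.im ^ 2 = -b₂ := by
      have := congrArg Complex.re hsq
      simpa [pow_two, Complex.mul_re, sq] using this
    have him2 : z.re * z.im = 0 := by
      have h2 := congrArg Complex.im hsq
      simp [pow_two, Complex.mul_im] at h2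
      linarith
    have hre : z.re = 0 := by
      rcases mul_eq_zero.mp him2 with h1 | h1
      · exact h1
      · nlinarith [sq_nonneg z.re, sq_nonneg z.im]
    have himne : z.im ≠ 0 := by
      intro h1
      rw [hre, h1] at hre2; nlinarith
    rcases himne.lt_or_gt with hlt | hlt
    · have : z.arg = -(Real.pi / 2) := by
        rw [Complex.arg_eq_neg_pi_div_two_iff]; exact ⟨hre, hlt⟩
      rw [this, abs_neg, abs_of_pos (by linarith)]; linarith
    · have : z.arg = Real.pi / 2 := by
        rw [Complex.arg_eq_pi_div_two_iff]; exact ⟨hre, hlt⟩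
      rw [this, abs_of_pos (by linarith)]; linarith
end

section
/- Let b₁, b₂, b₃ be real numbers, let g(x) = x³ + b₁x² + b₂x + b₃, and let D(g) = 18·b₁·b₂·b₃ + b₁²·b₂² − 4·b₁³·b₃ − 4·b₂³ − 27·b₃². If D(g) < 0, b₁ < 0, b₂ < 0, and 2/3 < α ≤ 1, then there exists a complex root z of g with |arg(z)| < α·π/2 (so an equilibrium with characteristic polynomial g is unstable). -/
/-!
A real cubic `g` has a real root `r`; if `r ≥ 0` it is a root of argument `0`. Otherwise
`g = (x - r)(x² + c x + d)` with `c = b₁ + r`, `d = b₂ + b₁ r + r²`, and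
`D(g) = (c² - 4d) · g'(r)²`, so `D(g) < 0` forces a root `z` of the quadratic factor with
`Re z = -c/2` and `|z|² = d`. As `r, b₁, b₂ < 0` we get `c < 0` and `d = b₂ - b₁ c + c² < c²`,
i.e. `|z| < 2 Re z`, which means `|z.arg| < π/3 < α π/2`.
-/

open Real

lemma exists_cubic_eq_zero (b₁ b₂ b₃ : ℝ) : ∃ r : ℝ, r ^ 3 + b₁ * r ^ 2 + b₂ * r + b₃ = 0 := by
  -- At `x = ±M` the leading term dominates: `|b₁ x² + b₂ x + b₃| ≤ (M - 1) M² < M³`.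
  set M := 1 + |b₁| + |b₂| + |b₃|
  have hM : 1 ≤ M := by linarith [abs_nonneg b₁, abs_nonneg b₂, abs_nonneg b₃]
  have h₁ := abs_le.mp (le_refl |b₁|)
  have h₂ := abs_le.mp (le_refl |b₂|)
  have h₃ := abs_le.mp (le_refl |b₃|)
  have hM₂ : 0 ≤ M ^ 2 := sq_nonneg M
  have hneg : (-M) ^ 3 + b₁ * (-M) ^ 2 + b₂ * (-M) + b₃ ≤ 0 := by
    nlinarith [mul_le_mul_of_nonneg_left h₁.2 hM₂]
  have hpos : 0 ≤ M ^ 3 + b₁ * M ^ 2 + b₂ * M + b₃ := by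
    nlinarith [mul_le_mul_of_nonneg_left h₁.1 hM₂]
  obtain ⟨r, -, hr⟩ := intermediate_value_Icc (by linarith : -M ≤ M)
    (f := fun x : ℝ ↦ x ^ 3 + b₁ * x ^ 2 + b₂ * x + b₃) (by fun_prop) ⟨hneg, hpos⟩
  exact ⟨r, hr⟩

section CommRing

variable {R : Type*} [CommRing R] {b₁ b₂ b₃ r : R}

lemma cubic_eq_mul_quadratic_of_root (hr : r ^ 3 + b₁ * r ^ 2 + b₂ * r + b₃ = 0) (z : R) :
    z ^ 3 + b₁ * z ^ 2 + b₂ * z + b₃ =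
      (z - r) * (z ^ 2 + (b₁ + r) * z + (b₂ + b₁ * r + r ^ 2)) := by
  linear_combination hr

lemma cubic_discriminant_eq_of_root (hr : r ^ 3 + b₁ * r ^ 2 + b₂ * r + b₃ = 0) :
    18 * b₁ * b₂ * b₃ + b₁ ^ 2 * b₂ ^ 2 - 4 * b₁ ^ 3 * b₃ - 4 * b₂ ^ 3 - 27 * b₃ ^ 2 =
      ((b₁ + r) ^ 2 - 4 * (b₂ + b₁ * r + r ^ 2)) * (3 * r ^ 2 + 2 * b₁ * r + b₂) ^ 2 := by
  linear_combination (18 * b₁ * b₂ - 4 * b₁ ^ 3 - 27 * (b₃ - (r ^ 3 + b₁ * r ^ 2 + b₂ * r))) * hr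

end CommRing

lemma exists_quadratic_root_of_discrim_nonpos {c d : ℝ} (h : c ^ 2 ≤ 4 * d) :
    ∃ z : ℂ, z ^ 2 + c * z + d = 0 ∧ z.re = -c / 2 ∧ ‖z‖ ^ 2 = d := by
  set y := √(d - c ^ 2 / 4)
  have hy : y ^ 2 = d - c ^ 2 / 4 := sq_sqrt (by linarith)
  refine ⟨⟨-c / 2, y⟩, ?_, rfl, ?_⟩
  · apply Complex.ext <;> simp [pow_two] <;> nlinarith
  · rw [Complex.sq_norm, Complex.normSq_mk]
    nlinarith

lemma abs_arg_lt_pi_div_three {z : ℂ} (h : ‖z‖ < 2 * z.re) : |z.arg| < π / 3 := by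
  have hz : 0 < ‖z‖ := by
    refine norm_pos_iff.mpr fun h0 ↦ ?_
    simp [h0] at h
  have hcos : cos (π / 3) < cos |z.arg| := by
    rw [cos_abs, Complex.cos_arg (norm_pos_iff.mp hz), cos_pi_div_three, lt_div_iff₀ hz]
    linarith
  by_contra! hle
  exact hcos.not_ge (cos_le_cos_of_nonneg_of_le_pi (by positivity) (Complex.abs_arg_le_pi z) hle)

theorem exists_cubic_root_abs_arg_lt_pi_div_three {b₁ b₂ b₃ : ℝ}
    (hD : 18 * b₁ * b₂ * b₃ + b₁ ^ 2 * b₂ ^ 2 - 4 * b₁ ^ 3 * b₃ - 4 * b₂ ^ 3 - 27 * b₃ ^ 2 < 0)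
    (hb₁ : b₁ < 0) (hb₂ : b₂ < 0) :
    ∃ z : ℂ, z ^ 3 + (b₁ : ℂ) * z ^ 2 + (b₂ : ℂ) * z + (b₃ : ℂ) = 0 ∧ |z.arg| < π / 3 := by
  obtain ⟨r, hr⟩ := exists_cubic_eq_zero b₁ b₂ b₃
  have hrC : (r : ℂ) ^ 3 + b₁ * (r : ℂ) ^ 2 + b₂ * r + b₃ = 0 := by exact_mod_cast hr
  rcases le_or_gt 0 r with hr₀ | hr₀
  · exact ⟨r, hrC, by simp [Complex.arg_ofReal_of_nonneg hr₀, pi_pos]⟩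
  set c := b₁ + r
  set d := b₂ + b₁ * r + r ^ 2
  have hdisc : c ^ 2 - 4 * d < 0 := by
    rw [cubic_discriminant_eq_of_root hr] at hD
    exact neg_of_mul_neg_left hD (sq_nonneg _)
  obtain ⟨z, hz, hre, hnorm⟩ := exists_quadratic_root_of_discrim_nonpos (c := c) (d := d)
    (by linarith)
  refine ⟨z, ?_, abs_arg_lt_pi_div_three ?_⟩
  · rw [cubic_eq_mul_quadratic_of_root hrC]
    push_cast [c, d] at hz
    rw [hz, mul_zero]
  · have hc : c < 0 := by linarith
    have hdc : d < c ^ 2 := by nlinarith [mul_pos_of_neg_of_neg hb₁ hc]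
    rw [hre]
    exact lt_of_pow_lt_pow_left₀ 2 (by linarith) (by linarith)

theorem cubic_unstable_case_iv_general (b₁ b₂ b₃ α : ℝ)
    (hD : 18 * b₁ * b₂ * b₃ + b₁ ^ 2 * b₂ ^ 2 - 4 * b₁ ^ 3 * b₃
            - 4 * b₂ ^ 3 - 27 * b₃ ^ 2 < 0)
    (hb₁ : b₁ < 0) (hb₂ : b₂ < 0)
    (hα₁ : 2 / 3 < α) :
    ∃ z : ℂ, z ^ 3 + (b₁ : ℂ) * z ^ 2 + (b₂ : ℂ) * z + (b₃ : ℂ) = 0 ∧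
      |z.arg| < α * Real.pi / 2 := by
  obtain ⟨z, hz, harg⟩ := exists_cubic_root_abs_arg_lt_pi_div_three hD hb₁ hb₂
  exact ⟨z, hz, harg.trans (by nlinarith [pi_pos])⟩

/-- Fractional Routh–Hurwitz case (iv) for the cubic `g(x) = x³ + b₁x² + b₂x + b₃`:
if `D(g) < 0`, `b₁ < 0`, `b₂ < 0`, and `2/3 < α ≤ 1`, then some complex root
`z` of `g` satisfies `|arg z| < α·π/2` (instability). -/
theorem cubic_unstable_case_iv (b₁ b₂ b₃ α : ℝ)
    (hD : 18 * b₁ * b₂ * b₃ + b₁ ^ 2 * b₂ ^ 2 - 4 * b₁ ^ 3 * b₃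
            - 4 * b₂ ^ 3 - 27 * b₃ ^ 2 < 0)
    (hb₁ : b₁ < 0) (hb₂ : b₂ < 0)
    (hα₁ : 2 / 3 < α) (hα₂ : α ≤ 1) :
    ∃ z : ℂ, z ^ 3 + (b₁ : ℂ) * z ^ 2 + (b₂ : ℂ) * z + (b₃ : ℂ) = 0 ∧
      |z.arg| < α * Real.pi / 2 :=
  cubic_unstable_case_iv_general b₁ b₂ b₃ α hD hb₁ hb₂ hα₁
end
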